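/- arXiv:1712.03492 — 3 statements merged into one kernel-verified Lean document; each statement's English description precedes it below -/
import Mathlib

section
/- Let P be an additive category and let [α] : (A ← R_A) → (B ← R_B) be a morphism of the Freyd category A(P), represented by α : A → B. Then the morphism [id_B] : (B ← R_B) → (B ← R_B ⊕ A), where the structure morphism R_B ⊕ A → B of the target object has components ρ_B and α, is a cokernel of [α] in A(P). In particular, for every additive category P the Freyd category A(P) has cokernels. -/
open CategoryTheory Limits Opposite

set_option linter.unusedSectionVars false

universe v u

/-- An object of the Freyd category of `P`: a morphism `ρ : R ⟶ A` of `P`,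
thought of as "the object `A` with relations `R`". -/
structure FreydObj (P : Type u) [CategoryTheory.Category.{v} P] : Type max u v where
  R : P
  A : P
  ρ : R ⟶ A

namespace FreydObj

variable {P : Type u} [Category.{v} P] [Preadditive P]

/-- The "pre-Freyd" category: morphisms are morphism data admitting a witness;
the Freyd category is its quotient by the relation of having a homotopy `λ`. -/
instance : Category.{v} (FreydObj P) where
  Hom X Y := {α : X.A ⟶ Y.A // ∃ w : X.R ⟶ Y.R, X.ρ ≫ α = w ≫ Y.ρ}
  id X := ⟨𝟙 X.A, ⟨𝟙 X.R, by simp⟩⟩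
  comp {X Y Z} f g := ⟨f.1 ≫ g.1, by
    obtain ⟨w, hw⟩ := f.2
    obtain ⟨v, hv⟩ := g.2
    refine ⟨w ≫ v, ?_⟩
    rw [← Category.assoc, hw, Category.assoc, hv, Category.assoc]⟩
  id_comp f := Subtype.ext (Category.id_comp _)
  comp_id f := Subtype.ext (Category.comp_id _)
  assoc f g h := Subtype.ext (Category.assoc _ _ _)

@[simp] lemma comp_val {X Y Z : FreydObj P} (f : X ⟶ Y) (g : Y ⟶ Z) :
    (f ≫ g).1 = f.1 ≫ g.1 := rfl

@[simp] lemma id_val (X : FreydObj P) : (𝟙 X : X ⟶ X).1 = 𝟙 X.A := rfl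

instance homAdd (X Y : FreydObj P) : Add (X ⟶ Y) :=
  ⟨fun f g => ⟨f.1 + g.1, by
    obtain ⟨w, hw⟩ := f.2
    obtain ⟨v, hv⟩ := g.2
    exact ⟨w + v, by rw [Preadditive.comp_add, Preadditive.add_comp, hw, hv]⟩⟩⟩

instance homZero (X Y : FreydObj P) : Zero (X ⟶ Y) := ⟨⟨0, ⟨0, by simp⟩⟩⟩

instance homNeg (X Y : FreydObj P) : Neg (X ⟶ Y) :=
  ⟨fun f => ⟨-f.1, by
    obtain ⟨w, hw⟩ := f.2
    exact ⟨-w, by rw [Preadditive.comp_neg, Preadditive.neg_comp, hw]⟩⟩⟩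

@[simp] lemma add_val {X Y : FreydObj P} (f g : X ⟶ Y) : (f + g).1 = f.1 + g.1 := rfl
@[simp] lemma zero_val (X Y : FreydObj P) : (0 : X ⟶ Y).1 = 0 := rfl
@[simp] lemma neg_val {X Y : FreydObj P} (f : X ⟶ Y) : (-f).1 = -f.1 := rfl

instance homAddCommGroup (X Y : FreydObj P) : AddCommGroup (X ⟶ Y) where
  add_assoc f g h := Subtype.ext (add_assoc f.1 g.1 h.1)
  zero_add f := Subtype.ext (zero_add f.1)
  add_zero f := Subtype.ext (add_zero f.1)
  add_comm f g := Subtype.ext (add_comm f.1 g.1)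
  neg_add_cancel f := Subtype.ext (neg_add_cancel f.1)
  nsmul := nsmulRec
  zsmul := zsmulRec

instance : Preadditive (FreydObj P) where
  add_comp _ _ _ f f' g := Subtype.ext (by simp [Preadditive.add_comp])
  comp_add _ _ _ f g g' := Subtype.ext (by simp [Preadditive.comp_add])

end FreydObj

/-- Two morphism data are identified in the Freyd category iff their difference
factors through the relations of the target. -/
def freydRel (P : Type u) [Category.{v} P] [Preadditive P] : HomRel (FreydObj P) :=
  fun {X Y} f g => ∃ l : X.A ⟶ Y.R, l ≫ Y.ρ = f.1 - g.1

instance freydRel_congruence (P : Type u) [Category.{v} P] [Preadditive P] :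
    Congruence (freydRel P) where
  equivalence :=
    { refl := fun f => ⟨0, by simp⟩
      symm := fun {f g} h => by
        obtain ⟨l, hl⟩ := h
        exact ⟨-l, by rw [Preadditive.neg_comp, hl]; abel⟩
      trans := fun {f g h} h₁ h₂ => by
        obtain ⟨l₁, hl₁⟩ := h₁
        obtain ⟨l₂, hl₂⟩ := h₂
        exact ⟨l₁ + l₂, by rw [Preadditive.add_comp, hl₁, hl₂]; abel⟩ }
  comp_left := by
    intro _ _ _ f _ _ h
    obtain ⟨l, hl⟩ := h
    exact ⟨f.1 ≫ l, by rw [Category.assoc, hl, Preadditive.comp_sub]; rfl⟩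
  comp_right g h := by
    obtain ⟨l, hl⟩ := h
    obtain ⟨w, hw⟩ := g.2
    exact ⟨l ≫ w, by
      rw [Category.assoc, ← hw, ← Category.assoc, hl, Preadditive.sub_comp]; rfl⟩

/-- The Freyd category of an additive category `P`. -/
abbrev Freyd (P : Type u) [Category.{v} P] [Preadditive P] :=
  CategoryTheory.Quotient (freydRel P)

noncomputable instance (P : Type u) [Category.{v} P] [Preadditive P] :
    Preadditive (Freyd P) :=
  CategoryTheory.Quotient.preadditive (freydRel P) (by
    rintro X Y f₁ f₂ g₁ g₂ ⟨l₁, hl₁⟩ ⟨l₂, hl₂⟩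
    exact ⟨l₁ + l₂, by
      rw [Preadditive.add_comp, hl₁, hl₂]
      show _ = (f₁ + g₁).1 - (f₂ + g₂).1
      simp only [FreydObj.add_val]
      abel⟩)

/-- The projection functor from the pre-Freyd category to the Freyd category. -/
abbrev Freyd.Q (P : Type u) [Category.{v} P] [Preadditive P] :
    FreydObj P ⥤ Freyd P :=
  CategoryTheory.Quotient.functor (freydRel P)

/-- `P` has weak kernels. -/
def HasWeakKernels (P : Type u) [Category.{v} P] [Preadditive P] : Prop :=
  ∀ ⦃A B : P⦄ (f : A ⟶ B), ∃ (K : P) (κ : K ⟶ A), κ ≫ f = 0 ∧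
    ∀ ⦃T : P⦄ (τ : T ⟶ A), τ ≫ f = 0 → ∃ u : T ⟶ K, u ≫ κ = τ

/-! A morphism `[γ]` out of `(B ← R_B)` kills `[α]` exactly when `α ≫ γ` factors through the
relations of the target as some `λ`, and then `γ` itself, with witness `(w_γ, λ)`, is a morphism
out of `(B ← R_B ⊞ A)`. The factorization is unique because the projection `[𝟙 B]` is
represented by a split epimorphism. -/

theorem CategoryTheory.Limits.CokernelCofork.nonempty_isColimit_of_epi {C : Type*} [Category C]
    [HasZeroMorphisms C] {X Y Q : C} {f : X ⟶ Y} (p : Y ⟶ Q) (w : f ≫ p = 0) [Epi p]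
    (h : ∀ {A : C} (k : Y ⟶ A), f ≫ k = 0 → ∃ l : Q ⟶ A, p ≫ l = k) :
    Nonempty (IsColimit (CokernelCofork.ofπ p w)) :=
  ⟨CokernelCofork.IsColimit.ofπ' p w fun k hk => ⟨(h k hk).choose, (h k hk).choose_spec⟩⟩

namespace FreydObj

variable {P : Type u} [Category.{v} P] [Preadditive P]

variable [HasBinaryBiproducts P] {X Y : FreydObj P} (f : X ⟶ Y)

noncomputable abbrev cokernelObj : FreydObj P :=
  ⟨Y.R ⊞ X.A, Y.A, biprod.desc Y.ρ f.1⟩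

noncomputable def cokernelπ : Y ⟶ cokernelObj f :=
  ⟨𝟙 Y.A, ⟨biprod.inl, by simp⟩⟩

@[simp] lemma cokernelπ_val : (cokernelπ f).1 = 𝟙 Y.A := rfl

lemma exists_cokernelπ_comp_eq {Z : FreydObj P} (g : Y ⟶ Z) (l : X.A ⟶ Z.R)
    (hl : l ≫ Z.ρ = f.1 ≫ g.1) : ∃ d : cokernelObj f ⟶ Z, cokernelπ f ≫ d = g := by
  obtain ⟨w, hw⟩ := g.2
  refine ⟨⟨g.1, biprod.desc w l, ?_⟩, Subtype.ext (Category.id_comp _)⟩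
  apply biprod.hom_ext' <;> simp [hw, hl]

end FreydObj

namespace Freyd

variable {P : Type u} [Category.{v} P] [Preadditive P]

lemma Q_map_eq_zero_iff {X Y : FreydObj P} (f : X ⟶ Y) :
    (Q P).map f = 0 ↔ ∃ l : X.A ⟶ Y.R, l ≫ Y.ρ = f.1 := by
  rw [show (0 : (Q P).obj X ⟶ (Q P).obj Y) = (Q P).map 0 from rfl,
    Quotient.functor_map_eq_iff]
  simp only [freydRel, FreydObj.zero_val, sub_zero]

lemma epi_Q_map_of_isSplitEpi {X Y : FreydObj P} (f : X ⟶ Y) [IsSplitEpi f.1] :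
    Epi ((Q P).map f) := by
  refine ⟨fun {Z} g h hgh => ?_⟩
  obtain ⟨g, rfl⟩ := (Q P).map_surjective (X := Y) (Y := Z.as) g
  obtain ⟨h, rfl⟩ := (Q P).map_surjective (X := Y) (Y := Z.as) h
  rw [← Functor.map_comp, ← Functor.map_comp, Quotient.functor_map_eq_iff] at hgh
  rw [Quotient.functor_map_eq_iff]
  obtain ⟨l, hl⟩ := hgh
  refine ⟨section_ f.1 ≫ l, ?_⟩
  simp [hl, Preadditive.comp_sub]

variable [HasBinaryBiproducts P] {X Y : FreydObj P} (f : X ⟶ Y)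

lemma Q_map_comp_Q_map_cokernelπ : (Q P).map f ≫ (Q P).map (FreydObj.cokernelπ f) = 0 := by
  rw [← Functor.map_comp, Q_map_eq_zero_iff]
  exact ⟨biprod.inr, by simp [FreydObj.comp_val]⟩

instance epi_Q_map_cokernelπ : Epi ((Q P).map (FreydObj.cokernelπ f)) :=
  have : IsSplitEpi (FreydObj.cokernelπ f).1 := IsSplitEpi.of_iso (𝟙 Y.A)
  epi_Q_map_of_isSplitEpi _

lemma exists_Q_map_cokernelπ_comp_eq {Z : Freyd P} (g : (Q P).obj Y ⟶ Z)
    (hg : (Q P).map f ≫ g = 0) : ∃ d, (Q P).map (FreydObj.cokernelπ f) ≫ d = g := by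
  obtain ⟨g, rfl⟩ := (Q P).map_surjective (X := Y) (Y := Z.as) g
  rw [← Functor.map_comp, Q_map_eq_zero_iff] at hg
  obtain ⟨l, hl⟩ := hg
  obtain ⟨d, hd⟩ := FreydObj.exists_cokernelπ_comp_eq f g l hl
  exact ⟨(Q P).map d, by rw [← Functor.map_comp, hd]⟩

lemma nonempty_isColimit_cokernelCofork :
    Nonempty (IsColimit (CokernelCofork.ofπ _ (Q_map_comp_Q_map_cokernelπ f))) :=
  CokernelCofork.nonempty_isColimit_of_epi _ _ fun g hg => exists_Q_map_cokernelπ_comp_eq f g hg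

instance hasCokernels : HasCokernels (Freyd P) where
  has_colimit := Quotient.induction (r := freydRel P) (P := fun f => HasCokernel f) fun f =>
    have ⟨hc⟩ := nonempty_isColimit_cokernelCofork f
    HasColimit.mk ⟨_, hc⟩

end Freyd

/-- for a morphism `[α] : (A ← R_A) ⟶ (B ← R_B)` of the Freyd category of an
additive category `P`, the morphism `[𝟙 B] : (B ← R_B) ⟶ (B ← R_B ⊕ A)` (where the
structure morphism of the target has components `ρ_B` and `α`) is a cokernel of `[α]`.
In particular `A(P)` has cokernels. -/
theorem freyd_cokernel (P : Type u) [Category.{v} P] [Preadditive P] [HasBinaryBiproducts P]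
    (X Y : FreydObj P) (f : X ⟶ Y) :
    (let Y' : FreydObj P := ⟨Y.R ⊞ X.A, Y.A, biprod.desc Y.ρ f.1⟩
     let π : Y ⟶ Y' := ⟨𝟙 Y.A, ⟨biprod.inl, by simp [Y']⟩⟩
     ∃ w : (Freyd.Q P).map f ≫ (Freyd.Q P).map π = 0,
       Nonempty (IsColimit (CokernelCofork.ofπ ((Freyd.Q P).map π) w))) ∧
    HasCokernels (Freyd P) :=
  ⟨⟨Freyd.Q_map_comp_Q_map_cokernelπ f, Freyd.nonempty_isColimit_cokernelCofork f⟩, inferInstance⟩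
end

section
/- Let k be a field, G a group, and M a subgroup of G. Let I be the right ideal of the group algebra k[G] generated by the set {1 − m : m ∈ M}. Then for every g ∈ G one has g ∈ M if and only if 1 − g ∈ I. -/
/-! Right multiplication by elements of `G` permutes the right cosets `M a`, so the kernel of the
`k`-linear map `k[G] → k[M\G]` induced by `a ↦ M a` is a right ideal. It contains every `1 - m`
with `m ∈ M`, hence all of `I`, while `1 - g` lies in it only when `M g = M`. -/

namespace MonoidAlgebra

variable {k G X : Type*}

section Monoid

variable [CommSemiring k] [Monoid G]

theorem mapDomainLinearMap_mul_of (f : G → X) (x : MonoidAlgebra k G) (h : G) :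
    mapDomainLinearMap k k f (x * of k G h) = mapDomainLinearMap k k (fun a => f (a * h)) x := by
  induction x using induction_linear with
  | zero => simp
  | add x y hx hy => rw [add_mul, map_add, map_add, hx, hy]
  | single a r => simp [single_mul_single]

theorem mapDomainLinearMap_mul_eq_zero {f : G → X} (t : G → X → X)
    (hf : ∀ a h, f (a * h) = t h (f a)) {x : MonoidAlgebra k G}
    (hx : mapDomainLinearMap k k f x = 0) (y : MonoidAlgebra k G) :
    mapDomainLinearMap k k f (x * y) = 0 := by
  induction y using induction_linear with
  | zero => simp
  | add y z hy hz => rw [mul_add, map_add, hy, hz, add_zero]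
  | single h r =>
    have hcomp : (fun a => f (a * h)) = t h ∘ f := funext (hf · h)
    rw [← mul_one r, ← smul_single', mul_smul_comm, map_smul, ← of_apply,
      mapDomainLinearMap_mul_of, hcomp, mapDomainLinearMap_comp, LinearMap.comp_apply, hx,
      map_zero, smul_zero]

theorem mapDomainLinearMap_eq_zero_of_mem_span {f : G → X} (t : G → X → X)
    (hf : ∀ a h, f (a * h) = t h (f a)) {S : Set (MonoidAlgebra k G)}
    (hS : ∀ s ∈ S, mapDomainLinearMap k k f s = 0) {x : MonoidAlgebra k G}
    (hx : x ∈ Submodule.span (MonoidAlgebra k G)ᵐᵒᵖ S) :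
    mapDomainLinearMap k k f x = 0 := by
  induction hx using Submodule.span_induction with
  | mem s hs => exact hS s hs
  | zero => exact map_zero _
  | add x y _ _ hx hy => rw [map_add, hx, hy, add_zero]
  | smul c x _ hx => exact mapDomainLinearMap_mul_eq_zero t hf hx c.unop

end Monoid

theorem mapDomainLinearMap_one_sub_of_eq_zero_iff [CommRing k] [Nontrivial k] [Monoid G]
    (f : G → X) (a : G) :
    mapDomainLinearMap k k f (1 - of k G a) = 0 ↔ f 1 = f a := by
  rw [one_def, of_apply, map_sub, mapDomainLinearMap_single, mapDomainLinearMap_single,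
    sub_eq_zero, single_left_inj one_ne_zero]

end MonoidAlgebra

theorem QuotientGroup.rightRel_mul_right {G : Type*} [Group G] (M : Subgroup G) {a b : G}
    (hab : rightRel M a b) (h : G) : rightRel M (a * h) (b * h) := by
  rw [rightRel_apply] at hab ⊢
  simpa [mul_assoc] using hab

open MonoidAlgebra in
/-- let `k` be a field, `G` a group and `M ≤ G` a subgroup.  Let `I` be the
right ideal of the group algebra `k[G]` generated by the elements `1 - m` for `m ∈ M`
(i.e. the `k[G]ᵐᵒᵖ`-submodule of `k[G]` spanned by them).  Then for every `g ∈ G` we have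
`g ∈ M` if and only if `1 - g ∈ I`. -/
theorem mem_subgroup_iff_one_sub_mem_right_ideal
    (k : Type*) [Field k] (G : Type*) [Group G] (M : Subgroup G) (g : G) :
    g ∈ M ↔
      (1 - MonoidAlgebra.of k G g) ∈
        Submodule.span (MonoidAlgebra k G)ᵐᵒᵖ
          ((fun m => 1 - MonoidAlgebra.of k G m) '' (M : Set G)) := by
  let q : G → Quotient (QuotientGroup.rightRel M) := Quotient.mk''
  have hq : ∀ a, mapDomainLinearMap k k q (1 - of k G a) = 0 ↔ a ∈ M := fun a => by
    rw [mapDomainLinearMap_one_sub_of_eq_zero_iff, Quotient.eq'', QuotientGroup.rightRel_apply,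
      inv_one, mul_one]
  refine ⟨fun hg => Submodule.subset_span ⟨g, hg, rfl⟩, fun hI => (hq g).1 ?_⟩
  refine mapDomainLinearMap_eq_zero_of_mem_span
    (fun h => Quotient.map' (· * h) fun _ _ hab => QuotientGroup.rightRel_mul_right M hab h)
    (fun _ _ => rfl) ?_ hI
  rintro _ ⟨m, hm, rfl⟩
  exact (hq m).2 hm
end

section
/- Let k be a field and let R be the quotient of the polynomial ring k[z, x_0, x_1, x_2, …] in one variable z and countably many variables x_i by the ideal generated by all products z·x_i (i ∈ ℕ). Then the kernel of the R-linear endomorphism of R given by multiplication by (the image of) z equals the ideal of R generated by the images of the x_i (i ∈ ℕ), and this ideal is not finitely generated as an R-module. In particular, R is not a coherent ring. -/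
set_option synthInstance.maxHeartbeats 1000000
set_option maxHeartbeats 1000000

/-- The polynomial ring `k[z, x₀, x₁, …]`, where `z` is the variable indexed by `none`
and `xᵢ` is the variable indexed by `some i`. -/
abbrev Stmt13.Poly (k : Type) [Field k] : Type := MvPolynomial (Option ℕ) k

/-- The ideal `⟨z·xᵢ ∣ i ∈ ℕ⟩`. -/
noncomputable abbrev Stmt13.I (k : Type) [Field k] : Ideal (Stmt13.Poly k) :=
  Ideal.span {p : Stmt13.Poly k |
    ∃ i : ℕ, p = MvPolynomial.X none * MvPolynomial.X (some i)}

/-- The ring `R = k[z, x₀, x₁, …] / ⟨z·xᵢ ∣ i ∈ ℕ⟩`. -/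
abbrev Stmt13.R (k : Type) [Field k] : Type := Stmt13.Poly k ⧸ Stmt13.I k

/-- The image of `z` in `R`. -/
noncomputable def Stmt13.z (k : Type) [Field k] : Stmt13.R k :=
  Ideal.Quotient.mk (Stmt13.I k) (MvPolynomial.X none)

/-- The image of `xᵢ` in `R`. -/
noncomputable def Stmt13.x (k : Type) [Field k] (i : ℕ) : Stmt13.R k :=
  Ideal.Quotient.mk (Stmt13.I k) (MvPolynomial.X (some i))

/-!
Sending every `xᵢ` to `0` is an endomorphism of `k[z, x₀, x₁, …]` that vanishes on `⟨z·xᵢ⟩` and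
fixes `p` modulo `⟨xᵢ⟩`; as the polynomial ring is a domain, `z·p ∈ ⟨z·xᵢ⟩` therefore forces
`p ∈ ⟨xᵢ⟩`. The evaluation `x_N ↦ 1`, all other variables `↦ 0`, factors through `R` and kills
every `xᵢ` with `i ≠ N`, so no finitely many of the `xᵢ` generate the ideal they span; by
compactness of finitely generated submodules, neither does any finite set.
-/

theorem Submodule.not_fg_span_range_of_forall_finset {R M ι : Type*} [Semiring R]
    [AddCommMonoid M] [Module R M] (v : ι → M)
    (h : ∀ s : Finset ι, ∃ i, v i ∉ span R (v '' s)) : ¬ (span R (Set.range v)).FG := by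
  intro hfg
  obtain ⟨s, hs⟩ := CompleteLattice.IsCompactElement.exists_finset_of_le_iSup _
    ((fg_iff_compact _).1 hfg) (fun i => R ∙ v i)
    span_range_eq_iSup.le
  obtain ⟨i, hi⟩ := h s
  have hsup : ⨆ j ∈ s, R ∙ v j = span R (v '' s) := by
    rw [Set.image_eq_iUnion, span_iUnion₂]
    rfl
  exact hi (hsup ▸ hs (subset_span ⟨i, rfl⟩))

theorem LinearMap.not_forall_ker_fg_of_ker_mulLeft_not_fg {R : Type*} [CommRing R] (a : R)
    (h : ¬ (ker (mulLeft R a)).FG) :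
    ¬ ∀ (m n : ℕ) (f : (Fin m → R) →ₗ[R] (Fin n → R)), (ker f).FG := by
  intro hcoh
  let e : (Fin 1 → R) ≃ₗ[R] R := LinearEquiv.funUnique (Fin 1) R R
  have hker : ker (e.symm.toLinearMap ∘ₗ mulLeft R a ∘ₗ e.toLinearMap) =
      (ker (mulLeft R a)).comap e.toLinearMap := by
    rw [LinearEquiv.ker_comp, ker_comp]
  apply h
  simpa [hker, Submodule.map_comap_eq_of_surjective e.surjective] using
    (hcoh 1 1 (e.symm.toLinearMap ∘ₗ mulLeft R a ∘ₗ e.toLinearMap)).map e.toLinearMap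

namespace Stmt13

open MvPolynomial

variable {k : Type} [Field k]

theorem I_le_ker {S : Type*} [CommRing S] (f : Poly k →+* S)
    (hf : ∀ i, f (X none) * f (X (some i)) = 0) : I k ≤ RingHom.ker f :=
  Ideal.span_le.2 <| by
    rintro _ ⟨i, rfl⟩
    simp [hf]

theorem z_mul_x (i : ℕ) : z k * x k i = 0 := by
  rw [z, x, ← map_mul, Ideal.Quotient.eq_zero_iff_mem]
  exact Ideal.subset_span ⟨i, rfl⟩

variable (k) in
noncomputable def killX : Poly k →ₐ[k] Poly k :=
  aeval fun j => j.elim (X none) fun _ => 0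

theorem killX_z : killX k (X none) = X none := by simp [killX]

theorem killX_x (i : ℕ) : killX k (X (some i)) = 0 := by simp [killX]

theorem sub_killX_mem_span_X (p : Poly k) :
    p - killX k p ∈ Ideal.span (Set.range fun i => (X (some i) : Poly k)) := by
  set J := Ideal.span (Set.range fun i => (X (some i) : Poly k))
  have hcomp : (Ideal.Quotient.mkₐ k J).comp (killX k) = Ideal.Quotient.mkₐ k J := by
    refine algHom_ext fun j => ?_
    rcases j with _ | i
    · simp [killX_z]
    · have hX : X (some i) ∈ J := Ideal.subset_span ⟨i, rfl⟩
      simp [killX_x, Ideal.Quotient.eq_zero_iff_mem.2 hX]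
  exact Ideal.Quotient.eq.1 (AlgHom.congr_fun hcomp p).symm

theorem map_span_X_eq_span_x :
    (Ideal.span (Set.range fun i => (X (some i) : Poly k))).map (Ideal.Quotient.mk (I k)) =
      Ideal.span (Set.range (x k)) := by
  rw [Ideal.map_span, ← Set.range_comp]
  rfl

theorem ker_mulLeft_z : LinearMap.ker (LinearMap.mulLeft (R k) (z k)) =
    Ideal.span (Set.range (x k)) := by
  refine le_antisymm (fun r hr => ?_) (Ideal.span_le.2 ?_)
  · obtain ⟨p, rfl⟩ := Ideal.Quotient.mk_surjective r
    have hzp : X none * p ∈ I k := by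
      rw [← Ideal.Quotient.eq_zero_iff_mem, map_mul]
      exact hr
    have hkill : X none * killX k p = 0 := by
      simpa [killX_z] using I_le_ker (killX k).toRingHom (by simp [killX_x]) hzp
    have hp := sub_killX_mem_span_X (k := k) p
    rw [(mul_eq_zero.1 hkill).resolve_left (X_ne_zero none), sub_zero] at hp
    exact map_span_X_eq_span_x (k := k) ▸ Ideal.mem_map_of_mem _ hp
  · rintro _ ⟨i, rfl⟩
    exact z_mul_x i

variable (k) in
noncomputable def evalAt (N : ℕ) : R k →+* k :=
  Ideal.Quotient.lift (I k) (eval (Pi.single (some N) 1)) fun _ hp =>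
    RingHom.mem_ker.1 (I_le_ker _ (by simp) hp)

theorem evalAt_x (N i : ℕ) : evalAt k N (x k i) = if i = N then 1 else 0 := by
  rw [evalAt, x, Ideal.Quotient.lift_mk, eval_X]
  simp [Pi.single_apply]

theorem x_notMem_span_image {s : Finset ℕ} {N : ℕ} (hN : N ∉ s) :
    x k N ∉ Ideal.span (x k '' s) := by
  have hle : Ideal.span (x k '' s) ≤ RingHom.ker (evalAt k N) := by
    rw [Ideal.span_le]
    rintro _ ⟨i, hi, rfl⟩
    simp [evalAt_x, show i ≠ N by rintro rfl; exact hN hi]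
  intro hmem
  simpa [evalAt_x] using hle hmem

theorem span_x_not_fg : ¬ (Ideal.span (Set.range (x k))).FG :=
  Submodule.not_fg_span_range_of_forall_finset (x k) fun s =>
    (Infinite.exists_notMem_finset s).imp fun _ => x_notMem_span_image

end Stmt13

/-- in `R = k[z, x₀, x₁, …] / ⟨z·xᵢ⟩`, the kernel of the `R`-linear
endomorphism "multiplication by `z`" is the ideal generated by the `xᵢ`; this ideal is
not finitely generated as an `R`-module; and in particular `R` is not coherent (the
kernel of an `R`-linear map between finitely generated free `R`-modules need not be
finitely generated). -/
theorem not_coherent_example (k : Type) [Field k] :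
    LinearMap.ker (LinearMap.mulLeft (Stmt13.R k) (Stmt13.z k)) =
        Ideal.span (Set.range (Stmt13.x k)) ∧
    ¬ (Ideal.span (Set.range (Stmt13.x k))).FG ∧
    ¬ (∀ (m n : ℕ) (f : (Fin m → Stmt13.R k) →ₗ[Stmt13.R k] (Fin n → Stmt13.R k)),
        (LinearMap.ker f).FG) :=
  ⟨Stmt13.ker_mulLeft_z, Stmt13.span_x_not_fg,
    LinearMap.not_forall_ker_fg_of_ker_mulLeft_not_fg _
      (Stmt13.ker_mulLeft_z (k := k) ▸ Stmt13.span_x_not_fg)⟩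
end
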